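/- arXiv:1601.04739 — 3 statements merged into one kernel-verified Lean document; each statement's English description precedes it below -/
import Mathlib

section
/- Let $N \geq 1$, let $V = \{1,\dots,N\}$ be partitioned into disjoint nonempty sets $I$ and $J$, and let $\alpha, \beta \in \mathbb{R}$. Define the $N \times N$ symmetric matrix $M$ by $M_{ij} = -\alpha$ if $i \neq j$ and $i,j$ lie in the same part, $M_{ij} = -\beta$ if $i \neq j$ and $i,j$ lie in different parts, $M_{ii} = (|I|-1)\alpha + |J|\beta$ for $i \in I$, and $M_{ii} = (|J|-1)\alpha + |I|\beta$ for $i \in J$. Then the spectrum of $M$ consists of the eigenvalue $0$ with multiplicity $1$, the eigenvalue $N\beta$ with multiplicity $1$, the eigenvalue $|I|\alpha + |J|\beta$ with multiplicity $|I|-1$, and the eigenvalue $|J|\alpha + |I|\beta$ with multiplicity $|J|-1$. -/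
/-!
Write `λ = |I|α + |J|β` and `μ = |J|α + |I|β`. Off the diagonal, `x - M` is the matrix
`K = !![α, β; β, α]` pulled back along the map `V → Fin 2` recording the part of a vertex,
and on the diagonal it exceeds that pullback by `x - λ` on `I` and `x - μ` on `J`.
Writing the pullback as `P K Pᵀ` with `P` the incidence matrix of the partition, the
Weinstein–Aronszajn identity turns `det (x - M)` into
`(x - λ)^|I| (x - μ)^|J| · det (1 + K · diag (|I| / (x - λ), |J| / (x - μ)))`,
and since `x - λ + |I|α = x - |J|β` this `2 × 2` determinant is
`x (x - Nβ) / ((x - λ) (x - μ))`. Both sides of the claim are polynomials agreeing at every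
`x ∉ {λ, μ}`, hence equal.
-/

open Finset Polynomial

/-- The bipartite matrix of the paper: off-diagonal entries `-α` within parts and
`-β` across parts, with diagonal entries making all row sums zero. -/
def bipartiteMatrix (N : ℕ) (I : Finset (Fin N)) (α β : ℝ) :
    Matrix (Fin N) (Fin N) ℝ :=
  Matrix.of fun i j =>
    if i = j then
      (if i ∈ I then ((I.card : ℝ) - 1) * α + (Iᶜ.card : ℝ) * β
       else ((Iᶜ.card : ℝ) - 1) * α + (I.card : ℝ) * β)
    else (if (i ∈ I ↔ j ∈ I) then -α else -β)

namespace Matrix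

variable {m n : Type*} [DecidableEq m] (R : Type*)

def fiberIncidence [Zero R] [One R] (c : n → m) : Matrix n m R :=
  Matrix.of fun i k => if c i = k then 1 else 0

variable {R}

theorem fiberIncidence_mul_mul_transpose [Fintype m] [CommSemiring R] (c : n → m)
    (A : Matrix m m R) :
    fiberIncidence R c * A * (fiberIncidence R c)ᵀ = A.submatrix c c := by
  ext i j
  simp [fiberIncidence, mul_apply]

theorem transpose_fiberIncidence_mul_diagonal_mul [Fintype n] [DecidableEq n] [CommSemiring R]
    (c : n → m) (h : n → R) :
    (fiberIncidence R c)ᵀ * diagonal h * fiberIncidence R c =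
      diagonal fun k => ∑ i with c i = k, h i := by
  ext k l
  rw [mul_apply]
  simp only [mul_diagonal, fiberIncidence, transpose_apply, of_apply, diagonal_apply, sum_filter]
  by_cases hkl : k = l
  · subst hkl; simp +contextual
  · simp only [hkl, if_false]
    refine sum_eq_zero fun i _ => ?_
    split_ifs <;> simp_all

theorem det_diagonal_comp_add_submatrix {K : Type*} [Fintype m] [Fintype n] [DecidableEq n]
    [Field K] (c : n → m) (d : m → K) (hd : ∀ i, d (c i) ≠ 0) (A : Matrix m m K) :
    (diagonal (d ∘ c) + A.submatrix c c).det =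
      (∏ i, d (c i)) * (1 + A * diagonal fun k => (#{i | c i = k} : K) / d k).det := by
  set P := fiberIncidence K c
  have hinv : diagonal (d ∘ c) * diagonal (fun i => (d (c i))⁻¹) = 1 := by
    rw [diagonal_mul_diagonal, ← diagonal_one]
    exact congrArg diagonal (funext fun i => mul_inv_cancel₀ (hd i))
  have hfactor : diagonal (d ∘ c) + P * A * Pᵀ =
      diagonal (d ∘ c) * (1 + (diagonal (fun i => (d (c i))⁻¹) * P) * (A * Pᵀ)) := by
    rw [Matrix.mul_add, Matrix.mul_one]
    simp only [← Matrix.mul_assoc, hinv, Matrix.one_mul]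
  have hfiber : (fun k => ∑ i with c i = k, (d (c i))⁻¹) = fun k => (#{i | c i = k} : K) / d k := by
    ext k
    rw [sum_congr rfl fun i hi => by rw [(mem_filter.mp hi).2], sum_const, nsmul_eq_mul,
      div_eq_mul_inv]
  rw [← fiberIncidence_mul_mul_transpose, hfactor, det_mul, det_diagonal, det_one_add_mul_comm,
    Matrix.mul_assoc A, ← Matrix.mul_assoc Pᵀ, transpose_fiberIncidence_mul_diagonal_mul, hfiber]
  rfl

end Matrix

open Matrix

section partIndex

variable {ι : Type*} [DecidableEq ι]

def partIndex (I : Finset ι) (i : ι) : Fin 2 :=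
  if i ∈ I then 0 else 1

theorem card_partIndex_eq_zero [Fintype ι] (I : Finset ι) : #{i | partIndex I i = 0} = #I := by
  simp [partIndex]

theorem card_partIndex_eq_one [Fintype ι] (I : Finset ι) : #{i | partIndex I i = 1} = #Iᶜ := by
  simp [partIndex, filter_not, compl_eq_univ_sdiff]

theorem prod_comp_partIndex {M : Type*} [CommMonoid M] [Fintype ι] (I : Finset ι)
    (f : Fin 2 → M) :
    ∏ i, f (partIndex I i) = f 0 ^ #I * f 1 ^ #Iᶜ := by
  rw [← prod_mul_prod_compl I]
  congr 1 <;> rw [← prod_const] <;> refine prod_congr rfl fun i hi => ?_ <;>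
    simp_all [partIndex]

end partIndex

theorem scalar_sub_bipartiteMatrix (N : ℕ) (I : Finset (Fin N)) (α β x : ℝ) :
    scalar (Fin N) x - bipartiteMatrix N I α β =
      diagonal (![x - (#I * α + #Iᶜ * β), x - (#Iᶜ * α + #I * β)] ∘ partIndex I) +
        !![α, β; β, α].submatrix (partIndex I) (partIndex I) := by
  ext i j
  by_cases hij : i = j
  · subst hij
    by_cases hi : i ∈ I <;>
      simp only [scalar_apply, bipartiteMatrix, Matrix.sub_apply, diagonal_apply_eq, of_apply,
        ↓reduceIte, hi, Matrix.add_apply, Function.comp_apply, partIndex, submatrix_apply,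
        cons_val', cons_val_zero, cons_val_one, cons_val_fin_one] <;>
      ring
  · by_cases hi : i ∈ I <;> by_cases hj : j ∈ I <;>
      simp [bipartiteMatrix, partIndex, hij, hi, hj]

theorem eval_charpoly_bipartiteMatrix (N : ℕ) (I : Finset (Fin N)) (hI : I.Nonempty)
    (hJ : Iᶜ.Nonempty) (α β x : ℝ) (hs : x ≠ #I * α + #Iᶜ * β) (ht : x ≠ #Iᶜ * α + #I * β) :
    (bipartiteMatrix N I α β).charpoly.eval x =
      x * (x - N * β) * (x - (#I * α + #Iᶜ * β)) ^ (#I - 1) *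
        (x - (#Iᶜ * α + #I * β)) ^ (#Iᶜ - 1) := by
  set d : Fin 2 → ℝ := ![x - (#I * α + #Iᶜ * β), x - (#Iᶜ * α + #I * β)] with hd
  have hp : d 0 ≠ 0 := by simpa [hd, sub_ne_zero] using hs
  have hq : d 1 ≠ 0 := by simpa [hd, sub_ne_zero] using ht
  have hd0 : ∀ i, d (partIndex I i) ≠ 0 := by
    intro i; unfold partIndex; split_ifs <;> assumption
  rw [eval_charpoly, scalar_sub_bipartiteMatrix, det_diagonal_comp_add_submatrix _ _ hd0,
    prod_comp_partIndex, diagonal_fin_two, card_partIndex_eq_zero, card_partIndex_eq_one,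
    one_fin_two, mul_fin_two, det_fin_two]
  simp only [Fin.isValue, mul_zero, add_zero, zero_add, Matrix.add_apply, of_apply, cons_val',
    cons_val_zero, cons_val_fin_one, cons_val_one]
  have hN : (N : ℝ) = #I + #Iᶜ := by rw [← Nat.cast_add, card_add_card_compl, Fintype.card_fin]
  rw [← pow_sub_one_mul hI.card_pos.ne' (d 0), ← pow_sub_one_mul hJ.card_pos.ne' (d 1)]
  field_simp
  simp only [hd, hN, cons_val_zero, cons_val_one]
  ring

theorem stmt_1_general (N : ℕ) (I : Finset (Fin N))
    (hI : I.Nonempty) (hJ : Iᶜ.Nonempty) (α β : ℝ) :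
    (bipartiteMatrix N I α β).charpoly =
      (X - C 0) * (X - C ((N : ℝ) * β)) *
      (X - C ((I.card : ℝ) * α + (Iᶜ.card : ℝ) * β)) ^ (I.card - 1) *
      (X - C ((Iᶜ.card : ℝ) * α + (I.card : ℝ) * β)) ^ (Iᶜ.card - 1) := by
  refine eq_of_infinite_eval_eq _ _ <| Set.Infinite.mono (fun x hx => ?_)
    ({(#I : ℝ) * α + #Iᶜ * β, (#Iᶜ : ℝ) * α + #I * β} : Set ℝ).toFinite.infinite_compl
  obtain ⟨hs, ht⟩ : x ≠ #I * α + #Iᶜ * β ∧ x ≠ #Iᶜ * α + #I * β := by simpa [not_or] using hx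
  show eval x _ = eval x _
  simp only [eval_charpoly_bipartiteMatrix N I hI hJ α β x hs ht, eval_mul,
    eval_pow, eval_sub, eval_X, eval_C, sub_zero]

theorem stmt_1 (N : ℕ) (hN : 1 ≤ N) (I : Finset (Fin N))
    (hI : I.Nonempty) (hJ : Iᶜ.Nonempty) (α β : ℝ) :
    (bipartiteMatrix N I α β).charpoly =
      (X - C 0) * (X - C ((N : ℝ) * β)) *
      (X - C ((I.card : ℝ) * α + (Iᶜ.card : ℝ) * β)) ^ (I.card - 1) *
      (X - C ((Iᶜ.card : ℝ) * α + (I.card : ℝ) * β)) ^ (Iᶜ.card - 1) :=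
  stmt_1_general N I hI hJ α β
end

section
/- Let $N \geq 2$, $E = \binom{N}{2}$, and let $\gamma_{ij} = \gamma_{ji}$ be symmetric weights on the complete graph with mean $Q = \frac{1}{E}\sum_{i<j}\gamma_{ij} > 0$ and second moment $P = \frac{1}{E}\sum_{i<j}\gamma_{ij}^2$. If $\frac{P - Q^2}{Q^2} < \frac{1}{N-1}$, then the graph Laplacian $\boldsymbol{L}$ is positive semi-definite with one-dimensional kernel spanned by $\mathbf{1}_N$; in fact its smallest nonzero eigenvalue is at least $N(Q - \sqrt{(N-1)(P-Q^2)}) > 0$. -/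
open Finset

/-- The graph Laplacian of the complete graph with edge weights `γ`. -/
def graphLaplacian (N : ℕ) (γ : Fin N → Fin N → ℝ) : Matrix (Fin N) (Fin N) ℝ :=
  Matrix.of fun i j => if i = j then ∑ k ∈ univ \ {i}, γ i k else -γ i j

/-!
Write `L = Q L₀ + L̃`, where `L₀` is the Laplacian of the unweighted complete graph and `L̃` the
Laplacian of the centred weights `γ - Q`. On vectors orthogonal to `1`, `x ⬝ L₀ x = N ‖x‖²`,
while Cauchy–Schwarz bounds `|x ⬝ L̃ x|` by the Hilbert–Schmidt norm of `L̃` times `‖x‖²`. That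
norm is at most `N · √((N - 1)(P - Q²))`, because each diagonal entry of `L̃` is a sum of `N - 1`
off-diagonal ones. Since `L` is symmetric and kills `1`, the quadratic form is unchanged by
adding multiples of `1`, so coercivity on `1ᗮ` gives both semidefiniteness and the kernel.
-/

open Matrix

section

variable {n : Type*} [Fintype n]

theorem dotProduct_mulVec_add_smul_of_mulVec_eq_zero {R : Type*} [CommRing R]
    {M : Matrix n n R} (hM : M.IsSymm) {v : n → R} (hv : M *ᵥ v = 0) (x : n → R) (c : R) :
    (x + c • v) ⬝ᵥ M *ᵥ (x + c • v) = x ⬝ᵥ M *ᵥ x := by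
  have hvM : v ᵥ* M = 0 := by rw [← mulVec_transpose, hM.eq, hv]
  rw [mulVec_add, mulVec_smul, hv, smul_zero, add_zero, add_dotProduct, smul_dotProduct,
    dotProduct_mulVec v, hvM, zero_dotProduct, smul_zero, add_zero]

theorem exists_sum_eq_zero_add_smul_one (x : n → ℝ) :
    ∃ y : n → ℝ, ∑ i, y i = 0 ∧ ∃ c : ℝ, x = y + c • fun _ => 1 := by
  rcases isEmpty_or_nonempty n with hn | hn
  · exact ⟨x, by simp, 0, by simp⟩
  set c := (∑ i, x i) / Fintype.card n
  refine ⟨x - c • fun _ => 1, ?_, c, by simp⟩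
  simp only [Pi.sub_apply, Pi.smul_apply, smul_eq_mul, mul_one, sum_sub_distrib, sum_const,
    card_univ, nsmul_eq_mul, c]
  rw [mul_div_cancel₀ _ (Nat.cast_ne_zero.mpr Fintype.card_ne_zero), sub_self]

theorem posSemidef_and_ker_eq_span_one_of_coercive [DecidableEq n] {M : Matrix n n ℝ}
    (hM : M.IsSymm) (hone : M *ᵥ (fun _ => 1) = 0) {c : ℝ} (hc : 0 < c)
    (hcoer : ∀ x : n → ℝ, ∑ i, x i = 0 → c * ∑ i, x i ^ 2 ≤ x ⬝ᵥ M *ᵥ x) :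
    M.PosSemidef ∧ LinearMap.ker (toLin' M) = Submodule.span ℝ {fun _ => 1} := by
  have hquad : ∀ y : n → ℝ, ∑ i, y i = 0 → ∀ a : ℝ,
      c * ∑ i, y i ^ 2 ≤ (y + a • fun _ => 1) ⬝ᵥ M *ᵥ (y + a • fun _ => 1) := fun y hy a => by
    rw [dotProduct_mulVec_add_smul_of_mulVec_eq_zero hM hone]
    exact hcoer y hy
  refine ⟨.of_dotProduct_mulVec_nonneg (isHermitian_iff_isSymm.mpr hM) fun x => ?_, ?_⟩
  · obtain ⟨y, hy, a, rfl⟩ := exists_sum_eq_zero_add_smul_one x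
    rw [star_trivial]
    exact (mul_nonneg hc.le (by positivity)).trans (hquad y hy a)
  refine le_antisymm (fun x hx => ?_) ?_
  · obtain ⟨y, hy, a, rfl⟩ := exists_sum_eq_zero_add_smul_one x
    rw [LinearMap.mem_ker, toLin'_apply] at hx
    have hy0 : ∑ i, y i ^ 2 ≤ 0 := by
      have := hquad y hy a
      rw [hx, dotProduct_zero] at this
      exact nonpos_of_mul_nonpos_right this hc
    have : y = 0 := by
      rw [← dotProduct_self_eq_zero]
      simpa [dotProduct, sq] using le_antisymm hy0 (by positivity)
    rw [this, zero_add]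
    exact Submodule.smul_mem _ a (Submodule.mem_span_singleton_self _)
  · rw [Submodule.span_le, Set.singleton_subset_iff, SetLike.mem_coe, LinearMap.mem_ker,
      toLin'_apply, hone]

theorem abs_dotProduct_mulVec_le (M : Matrix n n ℝ) (x : n → ℝ) :
    |x ⬝ᵥ M *ᵥ x| ≤ √(∑ i, ∑ j, M i j ^ 2) * ∑ i, x i ^ 2 := by
  have hcs := sum_mul_sq_le_sq_mul_sq (univ ×ˢ univ) (fun p : n × n => M p.1 p.2)
    (fun p => x p.1 * x p.2)
  simp only [sum_product, mul_pow, ← mul_sum, ← sum_mul] at hcs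
  have hq : x ⬝ᵥ M *ᵥ x = ∑ i, ∑ j, M i j * (x i * x j) := by
    simp only [dotProduct, mulVec, mul_sum]
    exact sum_congr rfl fun i _ => sum_congr rfl fun j _ => by ring
  rw [hq, ← Real.sqrt_sq (by positivity : 0 ≤ ∑ i, x i ^ 2), ← Real.sqrt_mul (by positivity)]
  exact Real.abs_le_sqrt (by nlinarith [hcs])

end

section GraphLaplacian

variable {N : ℕ}

theorem card_sdiff_singleton_fin (i : Fin N) :
    ((univ \ {i} : Finset (Fin N)).card : ℝ) = N - 1 := by
  rw [card_sdiff_of_subset (subset_univ _), card_singleton, card_univ, Fintype.card_fin,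
    Nat.cast_sub i.pos, Nat.cast_one]

theorem sum_sdiff_singleton_eq_sum_gt_add_sum_lt (g : Fin N → ℝ) (i : Fin N) :
    ∑ j ∈ univ \ {i}, g j
      = ∑ j ∈ univ.filter (fun j => i < j), g j + ∑ j ∈ univ.filter (fun j => j < i), g j := by
  rw [show univ \ {i} = univ.filter (fun j => j ≠ i) by ext; simp]
  simp only [sum_filter, ← sum_add_distrib]
  refine sum_congr rfl fun j _ => ?_
  rcases lt_trichotomy i j with h | rfl | h
  · simp [h, h.ne', h.not_gt]
  · simp
  · simp [h, h.ne, h.not_gt]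

theorem sum_sdiff_singleton_eq_two_mul_sum_lt (f : Fin N → Fin N → ℝ)
    (hf : ∀ i j, f i j = f j i) :
    ∑ i, ∑ j ∈ univ \ {i}, f i j = 2 * ∑ i, ∑ j ∈ univ.filter (fun j => i < j), f i j := by
  simp only [sum_sdiff_singleton_eq_sum_gt_add_sum_lt, sum_add_distrib, two_mul]
  congr 1
  simp only [sum_filter]
  rw [sum_comm]
  simp only [hf]

theorem graphLaplacian_isSymm {γ : Fin N → Fin N → ℝ} (hγ : ∀ i j, γ i j = γ j i) :
    (graphLaplacian N γ).IsSymm := by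
  refine IsSymm.ext fun i j => ?_
  by_cases h : i = j
  · subst h; rfl
  · simp [graphLaplacian, h, Ne.symm h, hγ i j]

theorem graphLaplacian_row (γ : Fin N → Fin N → ℝ) (i : Fin N) (y : Fin N → ℝ) :
    ∑ j, graphLaplacian N γ i j * y j = ∑ j ∈ univ \ {i}, γ i j * (y i - y j) := by
  have hoff : ∀ j ∈ univ \ {i}, graphLaplacian N γ i j * y j = -(γ i j * y j) := fun j hj => by
    simp [graphLaplacian, Ne.symm (by simpa using hj : j ≠ i)]
  have hdiag : graphLaplacian N γ i i = ∑ j ∈ univ \ {i}, γ i j := by simp [graphLaplacian]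
  rw [sum_eq_sum_sdiff_singleton_add (mem_univ i), sum_congr rfl hoff, sum_neg_distrib, hdiag,
    sum_mul]
  simp only [mul_sub, sum_sub_distrib]
  ring

theorem graphLaplacian_mulVec_one (γ : Fin N → Fin N → ℝ) :
    graphLaplacian N γ *ᵥ (fun _ => 1) = 0 := by
  ext i
  simpa [mulVec, dotProduct] using graphLaplacian_row γ i (fun _ => 1)

theorem dotProduct_graphLaplacian_mulVec (γ : Fin N → Fin N → ℝ) (x : Fin N → ℝ) :
    x ⬝ᵥ graphLaplacian N γ *ᵥ x = ∑ i, ∑ j ∈ univ \ {i}, γ i j * (x i ^ 2 - x i * x j) := by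
  simp only [dotProduct, mulVec, graphLaplacian_row, mul_sum]
  exact sum_congr rfl fun i _ => sum_congr rfl fun j _ => by ring

theorem sum_sdiff_singleton_sq_sub_mul (x : Fin N → ℝ) :
    ∑ i, ∑ j ∈ univ \ {i}, (x i ^ 2 - x i * x j) = N * ∑ i, x i ^ 2 - (∑ i, x i) ^ 2 := by
  have hrow : ∀ i, ∑ j ∈ univ \ {i}, (x i ^ 2 - x i * x j) = N * x i ^ 2 - x i * ∑ j, x j := by
    intro i
    rw [sum_sub_distrib, sum_const, nsmul_eq_mul, card_sdiff_singleton_fin, ← mul_sum,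
      sum_sdiff_eq_sub (subset_univ {i}), sum_singleton]
    ring
  simp only [hrow, sum_sub_distrib, ← mul_sum, ← sum_mul]
  ring

theorem sum_sq_graphLaplacian_le (w : Fin N → Fin N → ℝ) :
    ∑ i, ∑ j, graphLaplacian N w i j ^ 2 ≤ N * ∑ i, ∑ j ∈ univ \ {i}, w i j ^ 2 := by
  rw [mul_sum]
  refine sum_le_sum fun i _ => ?_
  rw [sum_eq_sum_sdiff_singleton_add (mem_univ i)]
  have hoff : ∑ j ∈ univ \ {i}, graphLaplacian N w i j ^ 2 = ∑ j ∈ univ \ {i}, w i j ^ 2 :=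
    sum_congr rfl fun j hj => by
      simp [graphLaplacian, Ne.symm (by simpa using hj : j ≠ i)]
  have hdiag : graphLaplacian N w i i ^ 2 ≤ (N - 1) * ∑ j ∈ univ \ {i}, w i j ^ 2 := by
    simpa [graphLaplacian, card_sdiff_singleton_fin] using
      sq_sum_le_card_mul_sum_sq (s := univ \ {i}) (f := w i)
  linarith

theorem le_dotProduct_graphLaplacian_mulVec (γ : Fin N → Fin N → ℝ) (Q : ℝ) {x : Fin N → ℝ}
    (hx : ∑ i, x i = 0) :
    (N * Q - √(N * ∑ i, ∑ j ∈ univ \ {i}, (γ i j - Q) ^ 2)) * ∑ i, x i ^ 2 ≤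
      x ⬝ᵥ graphLaplacian N γ *ᵥ x := by
  have hsplit : x ⬝ᵥ graphLaplacian N γ *ᵥ x =
      Q * (N * ∑ i, x i ^ 2 - (∑ i, x i) ^ 2) +
        x ⬝ᵥ graphLaplacian N (fun i j => γ i j - Q) *ᵥ x := by
    rw [dotProduct_graphLaplacian_mulVec, dotProduct_graphLaplacian_mulVec,
      ← sum_sdiff_singleton_sq_sub_mul, mul_sum, ← sum_add_distrib]
    refine sum_congr rfl fun i _ => ?_
    rw [mul_sum, ← sum_add_distrib]
    exact sum_congr rfl fun j _ => by ring
  have hpert : -(√(N * ∑ i, ∑ j ∈ univ \ {i}, (γ i j - Q) ^ 2) * ∑ i, x i ^ 2) ≤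
      x ⬝ᵥ graphLaplacian N (fun i j => γ i j - Q) *ᵥ x := by
    refine neg_le_of_abs_le ((abs_dotProduct_mulVec_le _ x).trans ?_)
    gcongr
    exact sum_sq_graphLaplacian_le _
  rw [hsplit, hx]
  linarith

theorem sum_sdiff_singleton_sub_sq_eq {γ : Fin N → Fin N → ℝ} (hγ : ∀ i j, γ i j = γ j i)
    {Q P : ℝ} (hQ : ∑ i, ∑ j ∈ univ.filter (fun j => i < j), γ i j = N.choose 2 * Q)
    (hP : ∑ i, ∑ j ∈ univ.filter (fun j => i < j), γ i j ^ 2 = N.choose 2 * P) :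
    ∑ i, ∑ j ∈ univ \ {i}, (γ i j - Q) ^ 2 = N * (N - 1) * (P - Q ^ 2) := by
  have hE : 2 * (N.choose 2 : ℝ) = N * (N - 1) := by rw [Nat.cast_choose_two]; ring
  have hcount : ∑ i : Fin N, ∑ _j ∈ univ \ {i}, Q ^ 2 = N * (N - 1) * Q ^ 2 := by
    simp only [sum_const, nsmul_eq_mul, card_sdiff_singleton_fin, card_univ, Fintype.card_fin]
    ring
  simp only [sub_sq, sum_add_distrib, sum_sub_distrib, mul_assoc, ← mul_sum]
  simp only [mul_comm _ Q, ← mul_sum]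
  rw [sum_sdiff_singleton_eq_two_mul_sum_lt γ hγ,
    sum_sdiff_singleton_eq_two_mul_sum_lt (fun i j => γ i j ^ 2) (fun i j => by rw [hγ]),
    hQ, hP, hcount]
  linear_combination (P - 2 * Q ^ 2) * hE

end GraphLaplacian

theorem stmt_9 (N : ℕ) (hN : 2 ≤ N) (E : ℕ) (hE : E = N.choose 2)
    (γ : Fin N → Fin N → ℝ) (hsym : ∀ i j, γ i j = γ j i) (Q P : ℝ)
    (hQ : (1 / (E : ℝ)) * ∑ i, ∑ j ∈ univ.filter (fun j => i < j), γ i j = Q)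
    (hQpos : 0 < Q)
    (hP : (1 / (E : ℝ)) * ∑ i, ∑ j ∈ univ.filter (fun j => i < j), (γ i j) ^ 2 = P)
    (hgap : (P - Q ^ 2) / Q ^ 2 < 1 / ((N : ℝ) - 1)) :
    (graphLaplacian N γ).PosSemidef ∧
    LinearMap.ker (Matrix.toLin' (graphLaplacian N γ)) =
      Submodule.span ℝ {fun _ => (1 : ℝ)} ∧
    0 < (N : ℝ) * (Q - Real.sqrt (((N : ℝ) - 1) * (P - Q ^ 2))) ∧
    ∀ x : Fin N → ℝ, ∑ i, x i = 0 →
      (N : ℝ) * (Q - Real.sqrt (((N : ℝ) - 1) * (P - Q ^ 2))) * (∑ i, (x i) ^ 2) ≤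
        dotProduct x ((graphLaplacian N γ).mulVec x) := by
  have hN1 : (0 : ℝ) < N - 1 := by
    have : (2 : ℝ) ≤ N := by exact_mod_cast hN
    linarith
  have hE0 : (E : ℝ) ≠ 0 := by
    rw [hE]
    exact_mod_cast (Nat.choose_pos hN).ne'
  have hS := sum_sdiff_singleton_sub_sq_eq hsym (Q := Q) (P := P)
    (by rw [← hQ, ← hE]; field_simp) (by rw [← hP, ← hE]; field_simp)
  have hroot : √(N * ∑ i, ∑ j ∈ univ \ {i}, (γ i j - Q) ^ 2) = N * √((N - 1) * (P - Q ^ 2)) := by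
    rw [hS, show (N : ℝ) * (N * (N - 1) * (P - Q ^ 2)) = N ^ 2 * ((N - 1) * (P - Q ^ 2)) by ring,
      Real.sqrt_mul (by positivity), Real.sqrt_sq (Nat.cast_nonneg _)]
  have hlam : 0 < (N : ℝ) * (Q - √((N - 1) * (P - Q ^ 2))) := by
    refine mul_pos (by linarith) (sub_pos.mpr ?_)
    rw [Real.sqrt_lt' hQpos]
    rw [div_lt_div_iff₀ (by positivity) hN1] at hgap
    linarith
  have hcoer : ∀ x : Fin N → ℝ, ∑ i, x i = 0 →
      N * (Q - √((N - 1) * (P - Q ^ 2))) * ∑ i, x i ^ 2 ≤ x ⬝ᵥ graphLaplacian N γ *ᵥ x :=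
    fun x hx => by simpa only [hroot, mul_sub] using le_dotProduct_graphLaplacian_mulVec γ Q hx
  obtain ⟨hpsd, hker⟩ := posSemidef_and_ker_eq_span_one_of_coercive (graphLaplacian_isSymm hsym)
    (graphLaplacian_mulVec_one γ) hlam hcoer
  exact ⟨hpsd, hker, hlam, hcoer⟩
end

section
/- With $B$ as in the bipartite construction, the matrix $BB^t$ annihilates $\mathbf{1}_N$, has the vector $v$ (with $v_i = |J|$ on $I$ and $v_i = -|I|$ on $J$) as an eigenvector with eigenvalue $\frac{4RN^2}{|I||J|}$, and every vector supported on $I$ with zero sum is an eigenvector with eigenvalue $\frac{4RN}{|I|}$. In particular $BB^t$ commutes with every bipartite matrix $M$ built on the same partition $(I,J)$. -/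
open Finset Matrix

/-- The `N × E` matrix `B` of the bipartite construction: columns are indexed by
edges `(l,k)`, `l < k`, of the complete graph; the entry at `(i, {l,k})` is
`± 2√(RN/(|I||J|))` when `i` is an endpoint of a cross edge (sign `+` if `i ∈ I`,
`-` if `i ∈ J = Iᶜ`), and `0` otherwise. -/
noncomputable def crossB (N : ℕ) (I : Finset (Fin N)) (R : ℝ) :
    Matrix (Fin N) {p : Fin N × Fin N // p.1 < p.2} ℝ :=
  Matrix.of fun i e =>
    if (i = e.1.1 ∨ i = e.1.2) ∧ ¬((e.1.1 ∈ I) ↔ (e.1.2 ∈ I)) then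
      (if i ∈ I then 1 else -1) *
        (2 * Real.sqrt (R * N / ((I.card : ℝ) * (Iᶜ.card : ℝ))))
    else 0

lemma bm_rowsum (N : ℕ) (I : Finset (Fin N)) (α β : ℝ) (i : Fin N) :
    ∑ j, bipartiteMatrix N I α β i j = 0 := by
  have hsplit : ∀ j, bipartiteMatrix N I α β i j =
      (if i = j then (if i ∈ I then ((I.card : ℝ) - 1) * α + (Iᶜ.card : ℝ) * β + α
        else ((Iᶜ.card : ℝ) - 1) * α + (I.card : ℝ) * β + α) else 0)
      + (if (i ∈ I ↔ j ∈ I) then -α else -β) := by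
    intro j
    by_cases h : i = j
    · subst h; simp [bipartiteMatrix]; split_ifs <;> ring
    · simp [bipartiteMatrix, h]
  simp only [hsplit]
  rw [Finset.sum_add_distrib, Finset.sum_ite_eq univ i, Finset.sum_ite]
  simp only [Finset.mem_univ, if_true, Finset.sum_const, nsmul_eq_mul]
  have h1 : Finset.univ.filter (fun j => i ∈ I ↔ j ∈ I) =
      (if i ∈ I then I else Iᶜ) := by
    split_ifs with hi <;> ext j <;> simp [hi]
  have h2 : Finset.univ.filter (fun j => ¬(i ∈ I ↔ j ∈ I)) =
      (if i ∈ I then Iᶜ else I) := by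
    split_ifs with hi <;> ext j <;> simp [hi]
  rw [h1, h2]
  by_cases hi : i ∈ I <;> simp [hi] <;> ring

lemma bm_symm (N : ℕ) (I : Finset (Fin N)) (α β : ℝ) (i j : Fin N) :
    bipartiteMatrix N I α β i j = bipartiteMatrix N I α β j i := by
  by_cases h : i = j
  · subst h; rfl
  · simp [bipartiteMatrix, h, Ne.symm h, iff_comm]

lemma bm_decomp (N : ℕ) (I : Finset (Fin N)) (α β : ℝ) :
    bipartiteMatrix N I α β =
      α • bipartiteMatrix N I 1 0 + β • bipartiteMatrix N I 0 1 := by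
  ext i j
  simp only [bipartiteMatrix, Matrix.add_apply, Matrix.smul_apply, Matrix.of_apply,
    smul_eq_mul]
  split_ifs <;> ring

lemma bm_K (N : ℕ) (I : Finset (Fin N)) :
    bipartiteMatrix N I 1 1 = (N : ℝ) • 1 - Matrix.of (fun _ _ => (1:ℝ)) := by
  have hc : (I.card : ℝ) + (Iᶜ.card : ℝ) = N := by
    have := Finset.card_add_card_compl I
    rw [Fintype.card_fin] at this
    exact_mod_cast congrArg (Nat.cast : ℕ → ℝ) this
  ext i j
  simp only [bipartiteMatrix, Matrix.sub_apply, Matrix.smul_apply, Matrix.of_apply,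
    Matrix.one_apply, smul_eq_mul]
  split_ifs <;> simp <;> linarith

lemma L_mulVec (N : ℕ) (I : Finset (Fin N)) (u : Fin N → ℝ) (i : Fin N) :
    (bipartiteMatrix N I 0 1).mulVec u i =
      if i ∈ I then (Iᶜ.card : ℝ) * u i - ∑ j ∈ Iᶜ, u j
      else (I.card : ℝ) * u i - ∑ j ∈ I, u j := by
  have hsplit : ∀ j, bipartiteMatrix N I 0 1 i j =
      (if i = j then (if i ∈ I then (Iᶜ.card : ℝ) else (I.card : ℝ)) else 0)
      + (if j ∈ (if i ∈ I then Iᶜ else I) then (-1 : ℝ) else 0) := by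
    intro j
    by_cases h : i = j
    · subst h; by_cases hi : i ∈ I <;> simp [bipartiteMatrix, hi]
    · by_cases hi : i ∈ I <;> by_cases hj : j ∈ I <;>
        simp [bipartiteMatrix, h, hi, hj]
  simp only [Matrix.mulVec, dotProduct]
  simp only [hsplit, add_mul, Finset.sum_add_distrib, ite_mul, zero_mul]
  rw [Finset.sum_ite_eq univ i]
  simp only [Finset.mem_univ, if_true]
  rw [Finset.sum_ite_mem, Finset.univ_inter]
  by_cases hi : i ∈ I <;> simp [hi, Finset.sum_neg_distrib] <;> ring_nf

lemma half_sum {N : ℕ} (f : Fin N × Fin N → ℝ)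
    (hs : ∀ a b, f (b, a) = f (a, b)) (hd : ∀ a, f (a, a) = 0) :
    ∑ e : {p : Fin N × Fin N // p.1 < p.2}, f e.1 = (∑ p, f p) / 2 := by
  have h0 : ∑ e : {p : Fin N × Fin N // p.1 < p.2}, f e.1
      = ∑ p ∈ univ.filter (fun p : Fin N × Fin N => p.1 < p.2), f p :=
    (Finset.sum_subtype _ (by simp) f).symm
  have hswap : ∑ p ∈ univ.filter (fun p : Fin N × Fin N => p.2 < p.1), f p
      = ∑ p ∈ univ.filter (fun p : Fin N × Fin N => p.1 < p.2), f p := by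
    apply Finset.sum_nbij' (fun p => (p.2, p.1)) (fun p => (p.2, p.1)) <;>
      simp [hs]
  have hsub : univ.filter (fun p : Fin N × Fin N => p.2 < p.1) ⊆
      univ.filter (fun p : Fin N × Fin N => ¬ p.1 < p.2) := by
    intro p hp
    simp only [Finset.mem_filter, Finset.mem_univ, true_and] at *
    exact not_lt.mpr hp.le
  have hnot : ∑ p ∈ univ.filter (fun p : Fin N × Fin N => ¬ p.1 < p.2), f p
      = ∑ p ∈ univ.filter (fun p : Fin N × Fin N => p.2 < p.1), f p := by
    refine (Finset.sum_subset hsub ?_).symm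
    intro p hp hnp
    simp only [Finset.mem_filter, Finset.mem_univ, true_and, not_lt] at hp hnp
    have : p.1 = p.2 := le_antisymm hnp hp
    have : p = (p.1, p.1) := by rw [Prod.ext_iff]; exact ⟨rfl, this.symm⟩
    rw [this, hd]
  have htot := Finset.sum_filter_add_sum_filter_not univ
    (fun p : Fin N × Fin N => p.1 < p.2) f
  rw [h0]
  rw [hnot, hswap] at htot
  linarith

lemma crossB_mul_transpose (N : ℕ) (I : Finset (Fin N)) (R : ℝ)
    (hI : I.Nonempty) (hJ : Iᶜ.Nonempty) (hR : 0 < R) :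
    crossB N I R * (crossB N I R)ᵀ =
      (4 * R * N / ((I.card : ℝ) * (Iᶜ.card : ℝ))) • bipartiteMatrix N I 0 1 := by
  set c : ℝ := 2 * Real.sqrt (R * N / ((I.card : ℝ) * (Iᶜ.card : ℝ))) with hc
  have hc2 : c ^ 2 = 4 * R * N / ((I.card : ℝ) * (Iᶜ.card : ℝ)) := by
    rw [hc, mul_pow, Real.sq_sqrt (by positivity)]; ring
  ext i j
  rw [Matrix.mul_apply]
  set f : Fin N × Fin N → ℝ := fun p =>
    (if (i = p.1 ∨ i = p.2) ∧ ¬(p.1 ∈ I ↔ p.2 ∈ I) then (if i ∈ I then 1 else -1) * c else 0) *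
    (if (j = p.1 ∨ j = p.2) ∧ ¬(p.1 ∈ I ↔ p.2 ∈ I) then (if j ∈ I then 1 else -1) * c else 0)
    with hf
  have hcol : ∀ e : {p : Fin N × Fin N // p.1 < p.2},
      crossB N I R i e * (crossB N I R)ᵀ e j = f e.1 := fun e => rfl
  have hs : ∀ a b : Fin N, f (b, a) = f (a, b) := by
    intro a b
    simp only [hf]
    exact congrArg₂ (· * ·) (if_congr (by tauto) rfl rfl) (if_congr (by tauto) rfl rfl)
  have hd : ∀ a : Fin N, f (a, a) = 0 := by intro a; simp [hf]
  rw [Finset.sum_congr rfl (fun e _ => hcol e), half_sum f hs hd]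
  rw [Matrix.smul_apply, smul_eq_mul, ← hc2]
  by_cases hij : i = j
  · subst hij
    have hpoint : ∀ l k : Fin N, f (l, k) =
        (if i = l ∧ ¬(l ∈ I ↔ k ∈ I) then c ^ 2 else 0) +
        (if i = k ∧ ¬(l ∈ I ↔ k ∈ I) then c ^ 2 else 0) := by
      intro l k
      by_cases h3 : (l ∈ I ↔ k ∈ I)
      · simp [hf, h3]
      · have hlk : l ≠ k := fun h => h3 (h ▸ Iff.rfl)
        by_cases h1 : i = l <;> by_cases h2 : i = k
        · exact absurd (h1.symm.trans h2) hlk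
        · simp [hf, h1, h2, h3, hlk, hlk.symm]
          split_ifs <;> ring
        · simp [hf, h1, h2, h3, hlk, hlk.symm]
          split_ifs <;> ring
        · simp [hf, h1, h2, h3]
    rw [Fintype.sum_prod_type]
    rw [Finset.sum_congr rfl (fun l _ => Finset.sum_congr rfl (fun k _ => hpoint l k))]
    simp only [Finset.sum_add_distrib]
    have hS1 : ∑ l, ∑ k, (if i = l ∧ ¬(l ∈ I ↔ k ∈ I) then c ^ 2 else 0)
        = ∑ k, (if ¬(i ∈ I ↔ k ∈ I) then c ^ 2 else 0) := by
      simp only [ite_and]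
      rw [Finset.sum_congr rfl (fun l _ => Finset.sum_ite_irrel _ _ _ _)]
      simp only [Finset.sum_const_zero]
      rw [Finset.sum_ite_eq univ i]
      simp
    have hS2 : ∑ l, ∑ k, (if i = k ∧ ¬(l ∈ I ↔ k ∈ I) then c ^ 2 else 0)
        = ∑ l, (if ¬(i ∈ I ↔ l ∈ I) then c ^ 2 else 0) := by
      rw [Finset.sum_comm]
      simp only [ite_and]
      rw [Finset.sum_congr rfl (fun k _ => Finset.sum_ite_irrel _ _ _ _)]
      simp only [Finset.sum_const_zero]
      rw [Finset.sum_ite_eq univ i]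
      simp only [Finset.mem_univ, if_true]
      exact Finset.sum_congr rfl (fun l _ => if_congr (by tauto) rfl rfl)
    have hcnt : ∑ k, (if ¬(i ∈ I ↔ k ∈ I) then c ^ 2 else 0)
        = (if i ∈ I then (Iᶜ.card : ℝ) else (I.card : ℝ)) * c ^ 2 := by
      by_cases hi : i ∈ I
      · rw [Finset.sum_congr rfl (fun k _ =>
          if_congr (show (¬(i ∈ I ↔ k ∈ I)) ↔ k ∈ Iᶜ by simp [hi]) rfl rfl)]
        rw [Finset.sum_ite_mem, Finset.univ_inter, Finset.sum_const, nsmul_eq_mul]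
        simp [hi]
      · rw [Finset.sum_congr rfl (fun k _ =>
          if_congr (show (¬(i ∈ I ↔ k ∈ I)) ↔ k ∈ I by simp [hi]) rfl rfl)]
        rw [Finset.sum_ite_mem, Finset.univ_inter, Finset.sum_const, nsmul_eq_mul]
        simp [hi]
    rw [hS1, hS2, hcnt]
    by_cases hi : i ∈ I <;> simp [bipartiteMatrix, hi] <;> ring
  · have hzero : ∀ p : Fin N × Fin N, p ≠ (i, j) → p ≠ (j, i) → f p = 0 := by
      intro p h1 h2
      simp only [hf, mul_eq_zero]
      by_cases hA : (i = p.1 ∨ i = p.2) ∧ ¬(p.1 ∈ I ↔ p.2 ∈ I)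
      · right; rw [if_neg]
        intro hB
        obtain ⟨hi', _⟩ := hA; obtain ⟨hj', _⟩ := hB
        rcases hi' with hi1 | hi2 <;> rcases hj' with hj1 | hj2
        · exact hij (hi1.trans hj1.symm)
        · exact h1 (by rw [Prod.ext_iff]; exact ⟨hi1.symm, hj2.symm⟩)
        · exact h2 (by rw [Prod.ext_iff]; exact ⟨hj1.symm, hi2.symm⟩)
        · exact hij (hi2.trans hj2.symm)
      · left; rw [if_neg hA]
    have hpair : ((i, j) : Fin N × Fin N) ≠ (j, i) := by
      simp only [ne_eq, Prod.mk.injEq, not_and]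
      exact fun h _ => hij h
    have htwo : ∑ p : Fin N × Fin N, f p = f (i, j) + f (j, i) := by
      rw [← Finset.sum_pair hpair]
      refine (Finset.sum_subset (Finset.subset_univ _) ?_).symm
      intro p _ hp
      simp only [Finset.mem_insert, Finset.mem_singleton] at hp
      push_neg at hp
      exact hzero p hp.1 hp.2
    rw [htwo]
    by_cases hx : (i ∈ I ↔ j ∈ I)
    · simp [hf, hx, bipartiteMatrix, hij]
    · have hx' : ¬(j ∈ I ↔ i ∈ I) := fun h => hx h.symm
      by_cases hi : i ∈ I <;> by_cases hj : j ∈ I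
      · exact absurd (iff_of_true hi hj) hx
      · simp [hf, hx, hx', hi, hj, bipartiteMatrix, hij]; ring
      · simp [hf, hx, hx', hi, hj, bipartiteMatrix, hij]; ring
      · exact absurd (iff_of_false hi hj) hx

lemma bm_mul_ones (N : ℕ) (I : Finset (Fin N)) (α β : ℝ) :
    bipartiteMatrix N I α β * Matrix.of (fun _ _ => (1:ℝ)) = 0 := by
  ext i j
  rw [Matrix.mul_apply]
  simp only [Matrix.of_apply, mul_one, Matrix.zero_apply]
  exact bm_rowsum N I α β i

lemma ones_mul_bm (N : ℕ) (I : Finset (Fin N)) (α β : ℝ) :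
    Matrix.of (fun _ _ => (1:ℝ)) * bipartiteMatrix N I α β = 0 := by
  ext i j
  rw [Matrix.mul_apply]
  simp only [Matrix.of_apply, one_mul, Matrix.zero_apply]
  rw [Finset.sum_congr rfl (fun k _ => bm_symm N I α β k j)]
  exact bm_rowsum N I α β j

lemma bm_commute (N : ℕ) (I : Finset (Fin N)) (α β : ℝ) :
    Commute (bipartiteMatrix N I 0 1) (bipartiteMatrix N I α β) := by
  have hones : Commute (bipartiteMatrix N I 0 1) (Matrix.of (fun _ _ => (1:ℝ))) := by
    unfold Commute SemiconjBy
    rw [bm_mul_ones, ones_mul_bm]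
  have hK : Commute (bipartiteMatrix N I 0 1) (bipartiteMatrix N I 1 1) := by
    rw [bm_K]
    exact ((Commute.one_right _).smul_right (N:ℝ)).sub_right hones
  have h10 : Commute (bipartiteMatrix N I 0 1) (bipartiteMatrix N I 1 0) := by
    have hd : bipartiteMatrix N I 1 0 =
        bipartiteMatrix N I 1 1 - bipartiteMatrix N I 0 1 := by
      rw [bm_decomp N I 1 1]; simp
    rw [hd]
    exact hK.sub_right (Commute.refl _)
  rw [bm_decomp N I α β]
  exact (h10.smul_right α).add_right ((Commute.refl _).smul_right β)

theorem stmt_14 (N : ℕ) (I : Finset (Fin N)) (hI : I.Nonempty) (hJ : Iᶜ.Nonempty)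
    (R : ℝ) (hR : 0 < R) :
    (crossB N I R * (crossB N I R)ᵀ).mulVec (fun _ => (1 : ℝ)) = 0 ∧
    (crossB N I R * (crossB N I R)ᵀ).mulVec
        (fun i => if i ∈ I then (Iᶜ.card : ℝ) else -(I.card : ℝ)) =
      (4 * R * (N : ℝ) ^ 2 / ((I.card : ℝ) * (Iᶜ.card : ℝ))) •
        (fun i => if i ∈ I then (Iᶜ.card : ℝ) else -(I.card : ℝ)) ∧
    (∀ w : Fin N → ℝ, (∀ i, i ∉ I → w i = 0) → ∑ i ∈ I, w i = 0 →
      (crossB N I R * (crossB N I R)ᵀ).mulVec w =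
        (4 * R * (N : ℝ) / (I.card : ℝ)) • w) ∧
    ∀ α β : ℝ, Commute (crossB N I R * (crossB N I R)ᵀ) (bipartiteMatrix N I α β) := by
  have hBBt := crossB_mul_transpose N I R hI hJ hR
  have haz : (I.card : ℝ) ≠ 0 := Nat.cast_ne_zero.mpr (Finset.card_ne_zero.mpr hI)
  have hbz : (Iᶜ.card : ℝ) ≠ 0 := Nat.cast_ne_zero.mpr (Finset.card_ne_zero.mpr hJ)
  have hNcard : (I.card : ℝ) + (Iᶜ.card : ℝ) = N := by
    have h := Finset.card_add_card_compl I
    rw [Fintype.card_fin] at h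
    exact_mod_cast congrArg (Nat.cast : ℕ → ℝ) h
  refine ⟨?_, ?_, ?_, ?_⟩
  · rw [hBBt, Matrix.smul_mulVec]
    have h0 : (bipartiteMatrix N I 0 1).mulVec (fun _ => (1:ℝ)) = 0 := by
      funext i
      rw [L_mulVec]
      split_ifs <;> simp
    rw [h0, smul_zero]
  · rw [hBBt, Matrix.smul_mulVec]
    have hv : (bipartiteMatrix N I 0 1).mulVec
        (fun i => if i ∈ I then (Iᶜ.card:ℝ) else -(I.card:ℝ)) =
        (N:ℝ) • (fun i => if i ∈ I then (Iᶜ.card:ℝ) else -(I.card:ℝ)) := by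
      funext i
      rw [L_mulVec]
      simp only [Pi.smul_apply, smul_eq_mul]
      by_cases hi : i ∈ I
      · rw [if_pos hi, if_pos hi]
        rw [Finset.sum_congr rfl (fun j hj => if_neg (by simpa using hj))]
        rw [Finset.sum_const, nsmul_eq_mul]
        linear_combination (Iᶜ.card : ℝ) * hNcard
      · rw [if_neg hi, if_neg hi]
        rw [Finset.sum_congr rfl (fun j hj => if_pos hj)]
        rw [Finset.sum_const, nsmul_eq_mul]
        linear_combination (-(I.card : ℝ)) * hNcard
    rw [hv, smul_smul]
    congr 1
    ring
  · intro w hw hsum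
    rw [hBBt, Matrix.smul_mulVec]
    have hw' : (bipartiteMatrix N I 0 1).mulVec w = (Iᶜ.card : ℝ) • w := by
      funext i
      rw [L_mulVec]
      simp only [Pi.smul_apply, smul_eq_mul]
      by_cases hi : i ∈ I
      · rw [if_pos hi]
        rw [Finset.sum_eq_zero (fun j hj => hw j (by simpa using hj))]
        ring
      · rw [if_neg hi, hw i hi, hsum]
        ring
    rw [hw', smul_smul]
    congr 1
    field_simp
  · intro α β
    rw [hBBt]
    exact (bm_commute N I α β).smul_left _
end
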